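/- Let R̂ be an N×N Hermitian matrix and γ > 0. For any w ∈ ℂ^N, the supremum of w^H R w over all Hermitian matrices R with spectral norm ‖R - R̂‖₂ ≤ √γ equals w^H R̂ w + √γ ‖w‖². -/

import Mathlib

open Matrix Complex
open scoped ComplexOrder

/-- The largest real eigenvalue of a complex matrix (as `sSup` of its set of real
eigenvalues); for a Hermitian matrix this is the largest eigenvalue. -/
noncomputable def lambdaMax {N : ℕ} (A : Matrix (Fin N) (Fin N) ℂ) : ℝ :=
  sSup {t : ℝ | ∃ v : Fin N → ℂ, v ≠ 0 ∧ A.mulVec v = (t : ℂ) • v}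

open Classical in
/-- The inverse of the positive definite square root of a positive definite matrix
(junk value `0` if the matrix is not positive definite). -/
noncomputable def isqrt {N : ℕ} (R : Matrix (Fin N) (Fin N) ℂ) : Matrix (Fin N) (Fin N) ℂ :=
  if h : R.PosDef then ((h.posSemidef.1.eigenvectorUnitary : Matrix (Fin N) (Fin N) ℂ) *
    diagonal ((↑) ∘ Real.sqrt ∘ h.posSemidef.1.eigenvalues) *
    (star (h.posSemidef.1.eigenvectorUnitary : Matrix (Fin N) (Fin N) ℂ)))⁻¹ else 0

/-- Euclidean norm of a complex vector. -/
noncomputable def vecNorm {N : ℕ} (v : Fin N → ℂ) : ℝ :=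
  Real.sqrt (∑ i, Complex.normSq (v i))

/-- Frobenius norm of a complex matrix. -/
noncomputable def frobNorm {N M : ℕ} (X : Matrix (Fin N) (Fin M) ℂ) : ℝ :=
  Real.sqrt (∑ i, ∑ j, Complex.normSq (X i j))

/-- The spectral (ℓ²-operator) norm of a complex square matrix. -/
noncomputable def specNorm {N : ℕ} (X : Matrix (Fin N) (Fin N) ℂ) : ℝ :=
  sSup {r : ℝ | ∃ v : Fin N → ℂ, vecNorm v ≤ 1 ∧ r = vecNorm (X.mulVec v)}

/-! Split `R = R̂ + (R - R̂)`: by Cauchy–Schwarz the perturbation contributes at most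
`‖R - R̂‖₂ ‖w‖² ≤ √γ ‖w‖²` to the quadratic form, and the Hermitian matrix `R̂ + √γ I` lies in the
ball and attains this bound. -/

open scoped Matrix.Norms.L2Operator
open WithLp (toLp ofLp)

section QuadraticForm

variable {𝕜 n : Type*} [RCLike 𝕜] [Fintype n]

lemma re_star_dotProduct_self (w : n → 𝕜) : RCLike.re (star w ⬝ᵥ w) = ‖toLp 2 w‖ ^ 2 := by
  rw [← inner_self_eq_norm_sq (𝕜 := 𝕜), EuclideanSpace.inner_toLp_toLp, dotProduct_comm]

variable [DecidableEq n]

lemma re_star_dotProduct_mulVec_le (A : Matrix n n 𝕜) (w : n → 𝕜) :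
    RCLike.re (star w ⬝ᵥ A *ᵥ w) ≤ ‖A‖ * ‖toLp 2 w‖ ^ 2 := by
  set T := toEuclideanCLM (n := n) (𝕜 := 𝕜) A
  have hinner : star w ⬝ᵥ A *ᵥ w = inner 𝕜 (toLp 2 w) (T (toLp 2 w)) := by
    rw [toEuclideanCLM_toLp, EuclideanSpace.inner_toLp_toLp, dotProduct_comm]
  calc RCLike.re (star w ⬝ᵥ A *ᵥ w) ≤ ‖toLp 2 w‖ * ‖T (toLp 2 w)‖ := by
        rw [hinner]; exact (RCLike.re_le_norm _).trans (norm_inner_le_norm _ _)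
    _ ≤ ‖toLp 2 w‖ * (‖A‖ * ‖toLp 2 w‖) := by grw [T.le_opNorm]; rfl
    _ = ‖A‖ * ‖toLp 2 w‖ ^ 2 := by ring

lemma re_star_dotProduct_mulVec_le_add (R Rhat : Matrix n n 𝕜) (w : n → 𝕜) :
    RCLike.re (star w ⬝ᵥ R *ᵥ w)
      ≤ RCLike.re (star w ⬝ᵥ Rhat *ᵥ w) + ‖R - Rhat‖ * ‖toLp 2 w‖ ^ 2 := by
  have hdiff := re_star_dotProduct_mulVec_le (R - Rhat) w
  rw [sub_mulVec, dotProduct_sub, map_sub] at hdiff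
  linarith

lemma re_star_dotProduct_add_smul_one_mulVec (A : Matrix n n 𝕜) (c : ℝ) (w : n → 𝕜) :
    RCLike.re (star w ⬝ᵥ (A + c • 1) *ᵥ w)
      = RCLike.re (star w ⬝ᵥ A *ᵥ w) + c * ‖toLp 2 w‖ ^ 2 := by
  rw [add_mulVec, smul_mulVec, one_mulVec, dotProduct_add, dotProduct_smul, map_add,
    RCLike.smul_re, re_star_dotProduct_self]

lemma l2_opNorm_smul_one_le (c : ℝ) : ‖(c • 1 : Matrix n n 𝕜)‖ ≤ |c| := by
  have hone : ‖(1 : Matrix n n 𝕜)‖ ≤ 1 := by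
    rw [cstar_norm_def, map_one]
    exact ContinuousLinearMap.norm_id_le
  calc ‖(c • 1 : Matrix n n 𝕜)‖ = ‖(c : 𝕜) • (1 : Matrix n n 𝕜)‖ := by
        rw [RCLike.real_smul_eq_coe_smul (K := 𝕜)]
    _ ≤ |c| * ‖(1 : Matrix n n 𝕜)‖ := by grw [norm_smul_le, RCLike.norm_ofReal]
    _ ≤ |c| := mul_le_of_le_one_right (abs_nonneg c) hone

end QuadraticForm

lemma vecNorm_eq_norm_toLp {N : ℕ} (v : Fin N → ℂ) : vecNorm v = ‖toLp 2 v‖ := by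
  simp [EuclideanSpace.norm_eq, vecNorm, Complex.normSq_eq_norm_sq]

lemma specNorm_eq_l2_opNorm {N : ℕ} (X : Matrix (Fin N) (Fin N) ℂ) : specNorm X = ‖X‖ := by
  rw [cstar_norm_def, ← ContinuousLinearMap.sSup_unitClosedBall_eq_norm, specNorm]
  congr 1
  ext r
  constructor
  · rintro ⟨v, hv, rfl⟩
    exact ⟨toLp 2 v, by simpa [vecNorm_eq_norm_toLp] using hv, by simp [vecNorm_eq_norm_toLp]⟩
  · rintro ⟨x, hx, rfl⟩
    refine ⟨ofLp x, by simpa [vecNorm_eq_norm_toLp] using hx, ?_⟩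
    rw [vecNorm_eq_norm_toLp, ← toEuclideanCLM_toLp, WithLp.toLp_ofLp]

theorem sup_quad_over_spectral_ball_general {N : ℕ}
    (Rhat : Matrix (Fin N) (Fin N) ℂ) (hRhat : Rhat.IsHermitian)
    (γ : ℝ) (w : Fin N → ℂ) :
    IsLUB
      {r : ℝ | ∃ R : Matrix (Fin N) (Fin N) ℂ, R.IsHermitian ∧
        specNorm (R - Rhat) ≤ Real.sqrt γ ∧ r = (star w ⬝ᵥ R.mulVec w).re}
      ((star w ⬝ᵥ Rhat.mulVec w).re + Real.sqrt γ * vecNorm w ^ 2) := by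
  simp_rw [specNorm_eq_l2_opNorm, vecNorm_eq_norm_toLp]
  refine ⟨?_, fun b hb => hb ⟨Rhat + √γ • 1, ?_, ?_, ?_⟩⟩
  · rintro r ⟨R, -, hR, rfl⟩
    have hbound := re_star_dotProduct_mulVec_le_add R Rhat w
    simp only [RCLike.re_to_complex] at hbound
    grw [hbound, hR]
  · exact hRhat.add (isHermitian_one.smul (IsSelfAdjoint.all _))
  · simpa [abs_of_nonneg (Real.sqrt_nonneg γ)] using
      l2_opNorm_smul_one_le (𝕜 := ℂ) (n := Fin N) √γ
  · exact (re_star_dotProduct_add_smul_one_mulVec Rhat √γ w).symm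

/-- the supremum of `wᴴ R w` over Hermitian `R` with spectral norm
`‖R - R̂‖₂ ≤ √γ` equals `wᴴ R̂ w + √γ ‖w‖²`. -/
theorem sup_quad_over_spectral_ball {N : ℕ}
    (Rhat : Matrix (Fin N) (Fin N) ℂ) (hRhat : Rhat.IsHermitian)
    (γ : ℝ) (hγ : 0 < γ) (w : Fin N → ℂ) :
    IsLUB
      {r : ℝ | ∃ R : Matrix (Fin N) (Fin N) ℂ, R.IsHermitian ∧
        specNorm (R - Rhat) ≤ Real.sqrt γ ∧ r = (star w ⬝ᵥ R.mulVec w).re}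
      ((star w ⬝ᵥ Rhat.mulVec w).re + Real.sqrt γ * vecNorm w ^ 2) :=
  sup_quad_over_spectral_ball_general Rhat hRhat γ w
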